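/- arXiv:2507.13649 — 2 statements merged into one kernel-verified Lean document; each statement's English description precedes it below -/
import Mathlib

section
/- Let n ≥ m ≥ 2 be integers and let k be an integer satisfying either 0 ≤ k ≤ n+2, or k = n+3 and (n,m) ∈ {(2,2),(3,2),(4,2)}. Then the inequality (in ℚ) n + 2 − k + (m+n+2)/(mn−1) ≤ 9/(mn−1) holds if and only if the triple (n,m,k) belongs to the set {(2,2,3),(2,2,4),(2,2,5),(3,2,5),(3,2,6),(4,2,6),(4,2,7),(5,2,7),(3,3,5),(4,3,6)}. -/
/-! Clearing the positive denominator `mn - 1` turns the inequality into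
`(n + 2 - k)(mn - 1) + m + n + 2 ≤ 9` over `ℤ`. For `k = n + 3` the left side is
`m + n + 3 - mn`, which is at most `9` in the three allowed cases. For `k ≤ n + 2`
the first summand is nonnegative and `mn - 1 ≥ 3`, so `m + n ≤ 7`; this leaves
finitely many `(n, m)`, and for each the admissible `k` are read off. -/

theorem add_div_le_div_iff_of_pos {α : Type*} [Field α] [LinearOrder α] [IsStrictOrderedRing α]
    {a b c d : α} (hd : 0 < d) : a + b / d ≤ c / d ↔ a * d + b ≤ c := by
  rw [add_div' _ _ _ hd.ne', div_le_div_iff_of_pos_right hd]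

theorem add_le_seven_of_cleared_le {n m k : ℤ} (hm : 2 ≤ m) (hnm : m ≤ n) (hkn : k ≤ n + 2)
    (h : (n + 2 - k) * (m * n - 1) + (m + n + 2) ≤ 9) : m + n ≤ 7 := by
  have hprod : 3 ≤ m * n - 1 := by nlinarith
  nlinarith

theorem cleared_le_nine_iff {n m k : ℤ} (hm : 2 ≤ m) (hnm : m ≤ n) (hk0 : 0 ≤ k)
    (hkn : k ≤ n + 2) :
    (n + 2 - k) * (m * n - 1) + (m + n + 2) ≤ 9 ↔
      (n, m, k) ∈ ({(2, 2, 3), (2, 2, 4), (2, 2, 5), (3, 2, 5), (3, 2, 6),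
        (4, 2, 6), (4, 2, 7), (5, 2, 7), (3, 3, 5), (4, 3, 6)} : Set (ℤ × ℤ × ℤ)) := by
  simp only [Set.mem_insert_iff, Set.mem_singleton_iff, Prod.mk.injEq]
  constructor
  · intro h
    have hsum := add_le_seven_of_cleared_le hm hnm hkn h
    have hm3 : m ≤ 3 := by omega
    have hn5 : n ≤ 5 := by omega
    interval_cases m <;> interval_cases n <;> omega
  · rintro (⟨rfl, rfl, rfl⟩ | ⟨rfl, rfl, rfl⟩ | ⟨rfl, rfl, rfl⟩ | ⟨rfl, rfl, rfl⟩ |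
      ⟨rfl, rfl, rfl⟩ | ⟨rfl, rfl, rfl⟩ | ⟨rfl, rfl, rfl⟩ | ⟨rfl, rfl, rfl⟩ |
      ⟨rfl, rfl, rfl⟩ | ⟨rfl, rfl, rfl⟩) <;> norm_num

/-- Lemma 3.1 (first part): for integers `n ≥ m ≥ 2` and `k` with either
`0 ≤ k ≤ n+2`, or `k = n+3` and `(n,m) ∈ {(2,2),(3,2),(4,2)}`, the inequality
`n + 2 - k + (m+n+2)/(mn-1) ≤ 9/(mn-1)` (in `ℚ`) holds iff `(n,m,k)` is one of
the ten listed triples. -/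
theorem stmt_0 (n m k : ℤ) (hm : 2 ≤ m) (hnm : m ≤ n)
    (hk : (0 ≤ k ∧ k ≤ n + 2) ∨
      (k = n + 3 ∧ ((n, m) = (2, 2) ∨ (n, m) = (3, 2) ∨ (n, m) = (4, 2)))) :
    (n : ℚ) + 2 - k + ((m : ℚ) + n + 2) / ((m : ℚ) * n - 1) ≤ 9 / ((m : ℚ) * n - 1) ↔
      (n, m, k) ∈ ({(2, 2, 3), (2, 2, 4), (2, 2, 5), (3, 2, 5), (3, 2, 6),
        (4, 2, 6), (4, 2, 7), (5, 2, 7), (3, 3, 5), (4, 3, 6)} : Set (ℤ × ℤ × ℤ)) := by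
  have hpos : (0 : ℚ) < m * n - 1 := by
    have : (0 : ℤ) < m * n - 1 := by nlinarith
    exact_mod_cast this
  rw [add_div_le_div_iff_of_pos hpos]
  norm_cast
  rcases hk with ⟨hk0, hkn⟩ | ⟨rfl, hpair⟩
  · exact cleared_le_nine_iff hm hnm hk0 hkn
  · rcases hpair with h | h | h <;> obtain ⟨rfl, rfl⟩ := Prod.mk.inj h <;> norm_num
end

section
/- Let n, m ≥ 2 be integers (viewed as real numbers), and set v = (m+n+2)/(mn−1), a = (n+1)/(mn−1), and τ = 1/(n+1) + (n+1)/(mn−1). Then (2/v)·( ∫₀^a (1/2)·(m − 1/n)²·t² dt + ∫_a^τ ( ((n+1)²/n)·(τ−t)·(t−a) + (1/2)·((n+1)²/n)²·(τ−t)² ) dt ) = (n³ + (m+4)n² + (3m+5)n + m + 1)/(3n(n+1)(m+n+2)). -/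
open intervalIntegral

lemma quad_integral (a b c0 c1 c2 : ℝ) :
    (∫ t in a..b, (c0 + c1 * t + c2 * t ^ 2)) =
      c0 * (b - a) + c1 / 2 * (b ^ 2 - a ^ 2) + c2 / 3 * (b ^ 3 - a ^ 3) := by
  have h1 : IntervalIntegrable (fun t : ℝ => c0 + c1 * t) MeasureTheory.volume a b :=
    (continuous_const.add (continuous_const.mul continuous_id)).intervalIntegrable a b
  have h2 : IntervalIntegrable (fun t : ℝ => c2 * t ^ 2) MeasureTheory.volume a b :=
    (continuous_const.mul (continuous_pow 2)).intervalIntegrable a b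
  have h3 : IntervalIntegrable (fun t : ℝ => c1 * t) MeasureTheory.volume a b :=
    (continuous_const.mul continuous_id).intervalIntegrable a b
  rw [intervalIntegral.integral_add h1 h2,
    intervalIntegral.integral_add (intervalIntegrable_const) h3,
    intervalIntegral.integral_const, intervalIntegral.integral_const_mul,
    intervalIntegral.integral_const_mul, integral_id, integral_pow]
  simp only [smul_eq_mul]
  ring

/-- Lemma 3.12 (value of `S(W^L;p)` at a point of `L` on one of the negative
curves): `(2/v)·(∫₀^a (1/2)(m − 1/n)²t² dt +
∫_a^τ (((n+1)²/n)(τ−t)(t−a) + (1/2)((n+1)²/n)²(τ−t)²) dt)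
= (n³ + (m+4)n² + (3m+5)n + m + 1)/(3n(n+1)(m+n+2))`, where
`v = (m+n+2)/(mn−1)`, `a = (n+1)/(mn−1)`, `τ = 1/(n+1) + (n+1)/(mn−1)`,
for integers `n, m ≥ 2`. -/
theorem stmt_6 (n m : ℤ) (hn : 2 ≤ n) (hm : 2 ≤ m)
    (v a τ : ℝ)
    (hv : v = ((m : ℝ) + n + 2) / ((m : ℝ) * n - 1))
    (ha : a = ((n : ℝ) + 1) / ((m : ℝ) * n - 1))
    (hτ : τ = 1 / ((n : ℝ) + 1) + ((n : ℝ) + 1) / ((m : ℝ) * n - 1)) :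
    (2 / v) * ((∫ t in (0 : ℝ)..a, (1 / 2) * ((m : ℝ) - 1 / (n : ℝ)) ^ 2 * t ^ 2) +
        ∫ t in a..τ, ((((n : ℝ) + 1) ^ 2 / (n : ℝ)) * (τ - t) * (t - a) +
          (1 / 2) * (((n : ℝ) + 1) ^ 2 / (n : ℝ)) ^ 2 * (τ - t) ^ 2)) =
      ((n : ℝ) ^ 3 + ((m : ℝ) + 4) * (n : ℝ) ^ 2 + (3 * (m : ℝ) + 5) * (n : ℝ) +
          (m : ℝ) + 1) /
        (3 * (n : ℝ) * ((n : ℝ) + 1) * ((m : ℝ) + (n : ℝ) + 2)) := by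
  have hN : (2 : ℝ) ≤ (n : ℝ) := by exact_mod_cast hn
  have hM : (2 : ℝ) ≤ (m : ℝ) := by exact_mod_cast hm
  set N : ℝ := (n : ℝ)
  set M : ℝ := (m : ℝ)
  have hN0 : N ≠ 0 := by linarith
  have hN1 : N + 1 ≠ 0 := by linarith
  have hMN : M * N - 1 ≠ 0 := by nlinarith
  have hMN2 : M + N + 2 ≠ 0 := by linarith
  set K : ℝ := (N + 1) ^ 2 / N with hK
  have e1 : (∫ t in (0:ℝ)..a, (1 / 2) * (M - 1 / N) ^ 2 * t ^ 2) =
      (1 / 2) * (M - 1 / N) ^ 2 / 3 * (a ^ 3 - 0 ^ 3) := by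
    have hfun : (fun t : ℝ => 1 / 2 * (M - 1 / N) ^ 2 * t ^ 2) =
        fun t : ℝ => 0 + 0 * t + (1 / 2 * (M - 1 / N) ^ 2) * t ^ 2 := by
      funext t; ring
    rw [hfun, quad_integral]; ring
  have e2 : (∫ t in a..τ, (K * (τ - t) * (t - a) +
        (1 / 2) * K ^ 2 * (τ - t) ^ 2)) =
      (-K * τ * a + K ^ 2 * τ ^ 2 / 2) * (τ - a) +
        (K * (τ + a) - K ^ 2 * τ) / 2 * (τ ^ 2 - a ^ 2) +
        (-K + K ^ 2 / 2) / 3 * (τ ^ 3 - a ^ 3) := by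
    have hfun : (fun t : ℝ => K * (τ - t) * (t - a) + 1 / 2 * K ^ 2 * (τ - t) ^ 2) =
        fun t : ℝ => (-K * τ * a + K ^ 2 * τ ^ 2 / 2) +
          (K * (τ + a) - K ^ 2 * τ) * t + (-K + K ^ 2 / 2) * t ^ 2 := by
      funext t; ring
    rw [hfun, quad_integral]
  rw [e1, e2, hv, ha, hτ, hK]
  have h2v : ((M + N + 2) / (M * N - 1)) ≠ 0 := div_ne_zero hMN2 hMN
  field_simp
  ring
end
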